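/- There exists a constant c₀ = c₀(θ, c, c') > 0 such that the following holds for all integers N ≥ 2, all ε ∈ (0,1), and all integers u, q ≥ 0 with N^{1−ε} ≤ e^u ≤ N^{1+ε}: setting T := c₀ e^q N^{1−ε}, one has D_{u,q} ≤ (1/T) ∫_ℝ |D_u(Θt)|² |P_{u,q}(t)|² Φ(t/T) dt. -/

import Mathlib

open MeasureTheory Filter
open scoped Classical

noncomputable section

/-- `e(z) = exp(2πiz)`. -/
def e (z : ℝ) : ℂ := Complex.exp (2 * Real.pi * Complex.I * z)

/-- Fourier transform of a real-valued function: `ĝ(x) = ∫ g(t) e(-xt) dt`. -/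
def fourierT (g : ℝ → ℝ) (x : ℝ) : ℂ := ∫ t : ℝ, (g t : ℂ) * e (-(x * t))

/-- The Dirichlet polynomial `D_u(t) = ∑_{e^u ≤ j < e^{u+1}} j^{2πit}`. -/
def Dpoly (u : ℕ) (t : ℝ) : ℂ :=
  ∑ j ∈ Finset.Ico ⌈Real.exp u⌉₊ ⌈Real.exp ((u : ℝ) + 1)⌉₊,
    (j : ℂ) ^ (((2 * Real.pi * t : ℝ) : ℂ) * Complex.I)

/-- The Dirichlet polynomial `P_{u,q}(t) = ∑_{(m,n)} (m^{1-Θ} - n^{1-Θ})^{2πit}`,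
with `Θ = 1/(1-θ)`. -/
def Ppoly (θ c c' : ℝ) (N : ℕ) (u q : ℕ) (t : ℝ) : ℂ :=
  let Θ : ℝ := 1 / (1 - θ)
  ∑ p ∈ (Finset.Icc ⌈c * Real.exp u / (N : ℝ) ^ (1 - θ)⌉₊ ⌊c' * Real.exp u / (N : ℝ) ^ (1 - θ)⌋₊ ×ˢ
      Finset.Icc ⌈c * Real.exp u / (N : ℝ) ^ (1 - θ)⌉₊ ⌊c' * Real.exp u / (N : ℝ) ^ (1 - θ)⌋₊).filter
      (fun p : ℕ × ℕ => Real.exp q ≤ (p.2 : ℝ) - (p.1 : ℝ) ∧ (p.2 : ℝ) - (p.1 : ℝ) < Real.exp ((q : ℝ) + 1)),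
    (((p.1 : ℝ) ^ (1 - Θ) - (p.2 : ℝ) ^ (1 - Θ) : ℝ) : ℂ) ^ (((2 * Real.pi * t : ℝ) : ℂ) * Complex.I)

/-- The condition defining the counting function `D_{u,q}`, with `Θ = 1/(1-θ)`. -/
def DuqCond (θ c c' : ℝ) (N : ℕ) (ε : ℝ) (u q : ℕ) (j₁ j₂ m₁ n₁ m₂ n₂ : ℕ) : Prop :=
  let Θ : ℝ := 1 / (1 - θ)
  0 < j₁ ∧ 0 < j₂ ∧ 0 < m₁ ∧ 0 < n₁ ∧ 0 < m₂ ∧ 0 < n₂ ∧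
  Real.exp u ≤ (j₁ : ℝ) ∧ (j₁ : ℝ) < Real.exp ((u : ℝ) + 1) ∧
  Real.exp u ≤ (j₂ : ℝ) ∧ (j₂ : ℝ) < Real.exp ((u : ℝ) + 1) ∧
  c * Real.exp u / (N : ℝ) ^ (1 - θ) ≤ (m₁ : ℝ) ∧ (m₁ : ℝ) ≤ c' * Real.exp u / (N : ℝ) ^ (1 - θ) ∧
  c * Real.exp u / (N : ℝ) ^ (1 - θ) ≤ (n₁ : ℝ) ∧ (n₁ : ℝ) ≤ c' * Real.exp u / (N : ℝ) ^ (1 - θ) ∧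
  c * Real.exp u / (N : ℝ) ^ (1 - θ) ≤ (m₂ : ℝ) ∧ (m₂ : ℝ) ≤ c' * Real.exp u / (N : ℝ) ^ (1 - θ) ∧
  c * Real.exp u / (N : ℝ) ^ (1 - θ) ≤ (n₂ : ℝ) ∧ (n₂ : ℝ) ≤ c' * Real.exp u / (N : ℝ) ^ (1 - θ) ∧
  Real.exp q ≤ (n₁ : ℝ) - (m₁ : ℝ) ∧ (n₁ : ℝ) - (m₁ : ℝ) < Real.exp ((q : ℝ) + 1) ∧
  Real.exp q ≤ (n₂ : ℝ) - (m₂ : ℝ) ∧ (n₂ : ℝ) - (m₂ : ℝ) < Real.exp ((q : ℝ) + 1) ∧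
  |(j₁ : ℝ) ^ Θ * ((m₁ : ℝ) ^ (1 - Θ) - (n₁ : ℝ) ^ (1 - Θ)) -
      (j₂ : ℝ) ^ Θ * ((m₂ : ℝ) ^ (1 - Θ) - (n₂ : ℝ) ^ (1 - Θ))| ≤ (N : ℝ) ^ ε

/-- The number of sextuples counted in `D_{u,q}`. -/
def Duq (θ c c' : ℝ) (N : ℕ) (ε : ℝ) (u q : ℕ) : ℕ :=
  Set.ncard {t : ℕ × ℕ × ℕ × ℕ × ℕ × ℕ |
    DuqCond θ c c' N ε u q t.1 t.2.1 t.2.2.1 t.2.2.2.1 t.2.2.2.2.1 t.2.2.2.2.2}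

/-! ### Auxiliary lemmas -/

lemma e_add (x y : ℝ) : e (x + y) = e x * e y := by
  unfold e; rw [← Complex.exp_add]; congr 1; push_cast; ring

lemma conj_e (x : ℝ) : (starRingEnd ℂ) (e x) = e (-x) := by
  unfold e
  rw [← Complex.exp_conj]
  congr 1
  simp only [map_mul, Complex.conj_I, Complex.conj_ofReal, map_ofNat]
  push_cast
  ring

lemma continuous_e : Continuous e := by
  unfold e
  exact Complex.continuous_exp.comp (by continuity)

lemma cpow_e {r : ℝ} (hr : 0 < r) (t : ℝ) :
    (r : ℂ) ^ (((2 * Real.pi * t : ℝ) : ℂ) * Complex.I) = e (t * Real.log r) := by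
  rw [Complex.cpow_def_of_ne_zero (by exact_mod_cast hr.ne')]
  rw [← Complex.ofReal_log hr.le]
  unfold e
  congr 1
  push_cast
  ring

lemma rpow_sub_rpow_lower {Θ m n : ℝ} (hΘ : 1 < Θ) (hm : 0 < m) (hmn : m < n) :
    (Θ - 1) * n ^ (-Θ) * (n - m) ≤ m ^ (1 - Θ) - n ^ (1 - Θ) := by
  have hnm : 0 < n - m := by linarith
  obtain ⟨ξ, hξ, hslope⟩ := exists_hasDerivAt_eq_slope (fun x => x ^ (1 - Θ))
      (fun x => (1 - Θ) * x ^ (1 - Θ - 1)) hmn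
      (fun x hx => (Real.continuousAt_rpow_const x _
        (Or.inl (ne_of_gt (lt_of_lt_of_le hm hx.1)))).continuousWithinAt)
      (fun x hx => Real.hasDerivAt_rpow_const (Or.inl (ne_of_gt (hm.trans hx.1))))
  have hξ0 : 0 < ξ := hm.trans hξ.1
  have key : m ^ (1 - Θ) - n ^ (1 - Θ) = (Θ - 1) * ξ ^ (-Θ) * (n - m) := by
    have h2 : (1 - Θ) * ξ ^ (1 - Θ - 1) * (n - m) = n ^ (1 - Θ) - m ^ (1 - Θ) := by
      rw [hslope]; field_simp
    have h3 : (1 - Θ - 1 : ℝ) = -Θ := by ring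
    rw [h3] at h2
    nlinarith [h2]
  rw [key]
  have hx : n ^ (-Θ) ≤ ξ ^ (-Θ) :=
    Real.rpow_le_rpow_of_nonpos hξ0 hξ.2.le (by linarith)
  have h4 : (Θ - 1) * n ^ (-Θ) ≤ (Θ - 1) * ξ ^ (-Θ) :=
    mul_le_mul_of_nonneg_left hx (by linarith)
  exact mul_le_mul_of_nonneg_right h4 hnm.le

lemma abs_log_le_aux {A B L D : ℝ} (hL : 0 < L) (hA : L ≤ A) (hB : L ≤ B)
    (hBA : B ≤ A) (hD : A - B ≤ D) : Real.log A - Real.log B ≤ D / L := by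
  have hB0 : 0 < B := hL.trans_le hB
  have hA0 : 0 < A := hL.trans_le hA
  have h1 : Real.log A - Real.log B = Real.log (A / B) :=
    (Real.log_div hA0.ne' hB0.ne').symm
  rw [h1]
  have h2 : Real.log (A / B) ≤ A / B - 1 :=
    Real.log_le_sub_one_of_pos (div_pos hA0 hB0)
  have h3 : A / B - 1 = (A - B) / B := by field_simp
  have h4 : (A - B) / B ≤ D / L :=
    div_le_div₀ (le_trans (by linarith) hD) hD hL hB
  linarith

lemma abs_log_sub_log_le {A B L D : ℝ} (hL : 0 < L) (hA : L ≤ A) (hB : L ≤ B)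
    (hD : |A - B| ≤ D) : |Real.log A - Real.log B| ≤ D / L := by
  rcases le_total B A with h | h
  · rw [abs_of_nonneg (by linarith)] at hD
    rw [abs_of_nonneg (sub_nonneg.mpr
      (Real.log_le_log_iff (hL.trans_le hB) (hL.trans_le hA) |>.mpr h))]
    exact abs_log_le_aux hL hA hB h hD
  · rw [abs_of_nonpos (by linarith)] at hD
    rw [abs_of_nonpos (sub_nonpos.mpr
      (Real.log_le_log_iff (hL.trans_le hA) (hL.trans_le hB) |>.mpr h))]
    have := abs_log_le_aux hL hB hA h (by linarith)
    linarith

lemma A_lower {θ c' : ℝ} (hθ0 : 0 < θ) (hθ1 : θ < 1) (hc' : 0 < c')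
    {N : ℕ} (hN : 2 ≤ N) (u q : ℕ) {j m n : ℝ}
    (hj : Real.exp u ≤ j) (hm : 0 < m)
    (hn : n ≤ c' * Real.exp u / (N : ℝ) ^ (1 - θ))
    (hq : Real.exp q ≤ n - m) :
    (1 / (1 - θ) - 1) / c' ^ (1 / (1 - θ)) * Real.exp q * N ≤
      j ^ (1 / (1 - θ)) * (m ^ (1 - 1 / (1 - θ)) - n ^ (1 - 1 / (1 - θ))) := by
  set Θ : ℝ := 1 / (1 - θ) with hΘdef
  have h1θ : 0 < 1 - θ := by linarith
  have hΘ1 : 1 < Θ := by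
    rw [hΘdef, lt_div_iff₀ h1θ]; linarith
  have hN0 : (0:ℝ) < N := by positivity
  have hNp : (0:ℝ) < (N:ℝ) ^ (1 - θ) := Real.rpow_pos_of_pos hN0 _
  have hmn : m < n := by nlinarith [Real.exp_pos q]
  have hn0 : 0 < n := hm.trans hmn
  have hju : 0 < j := lt_of_lt_of_le (Real.exp_pos _) hj
  have h1 : (Θ - 1) * n ^ (-Θ) * (n - m) ≤ m ^ (1 - Θ) - n ^ (1 - Θ) :=
    rpow_sub_rpow_lower hΘ1 hm hmn
  set R := c' * Real.exp u / (N : ℝ) ^ (1 - θ) with hRdef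
  have hR0 : 0 < R := by rw [hRdef]; positivity
  have h2 : R ^ (-Θ) ≤ n ^ (-Θ) :=
    Real.rpow_le_rpow_of_nonpos hn0 hn (by linarith)
  have hRp : (0:ℝ) < R ^ (-Θ) := Real.rpow_pos_of_pos hR0 _
  have h3 : (Θ - 1) * R ^ (-Θ) * Real.exp q ≤ m ^ (1 - Θ) - n ^ (1 - Θ) := by
    calc (Θ - 1) * R ^ (-Θ) * Real.exp q ≤ (Θ - 1) * n ^ (-Θ) * (n - m) := by
          apply mul_le_mul (mul_le_mul_of_nonneg_left h2 (by linarith)) hq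
            (Real.exp_pos q).le
          have hnp : (0:ℝ) < n ^ (-Θ) := Real.rpow_pos_of_pos hn0 _
          nlinarith
      _ ≤ _ := h1
  have h4 : (Real.exp u) ^ Θ ≤ j ^ Θ :=
    Real.rpow_le_rpow (Real.exp_pos _).le hj (by linarith)
  have hx0 : 0 < (Θ - 1) * R ^ (-Θ) * Real.exp q :=
    mul_pos (mul_pos (by linarith) hRp) (Real.exp_pos q)
  have h5 : (Real.exp u) ^ Θ * ((Θ - 1) * R ^ (-Θ) * Real.exp q) ≤
      j ^ Θ * (m ^ (1 - Θ) - n ^ (1 - Θ)) :=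
    mul_le_mul h4 h3 hx0.le (by positivity)
  refine le_trans (le_of_eq ?_) h5
  have hNN : ((N:ℝ) ^ (1 - θ)) ^ Θ = (N:ℝ) := by
    rw [← Real.rpow_mul hN0.le, show (1 - θ) * Θ = 1 by rw [hΘdef]; field_simp,
      Real.rpow_one]
  have hcomp : (Real.exp u) ^ Θ * R ^ (-Θ) = (N:ℝ) / c' ^ Θ := by
    rw [Real.rpow_neg hR0.le, hRdef, Real.div_rpow (by positivity) hNp.le,
      Real.mul_rpow hc'.le (Real.exp_pos _).le, hNN]
    have h6 : (0:ℝ) < c' ^ Θ := Real.rpow_pos_of_pos hc' _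
    have h7 : (0:ℝ) < (Real.exp (u:ℝ)) ^ Θ := Real.rpow_pos_of_pos (Real.exp_pos _) _
    field_simp
  calc (Θ - 1) / c' ^ Θ * Real.exp q * N
      = ((Real.exp u) ^ Θ * R ^ (-Θ)) * ((Θ - 1) * Real.exp q) := by
        rw [hcomp]; ring
    _ = (Real.exp u) ^ Θ * ((Θ - 1) * R ^ (-Θ) * Real.exp q) := by ring

lemma key_bound {θ c' : ℝ} (hθ0 : 0 < θ) (hθ1 : θ < 1) (hc' : 0 < c')
    {N : ℕ} (hN : 2 ≤ N) {ε : ℝ} (u q : ℕ)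
    {j₁ j₂ m₁ n₁ m₂ n₂ : ℝ}
    (hj₁ : Real.exp u ≤ j₁) (hj₂ : Real.exp u ≤ j₂)
    (hm₁ : 0 < m₁) (hm₂ : 0 < m₂)
    (hn₁ : n₁ ≤ c' * Real.exp u / (N : ℝ) ^ (1 - θ))
    (hn₂ : n₂ ≤ c' * Real.exp u / (N : ℝ) ^ (1 - θ))
    (hq₁ : Real.exp q ≤ n₁ - m₁) (hq₂ : Real.exp q ≤ n₂ - m₂)
    (hclose : |j₁ ^ (1 / (1 - θ)) * (m₁ ^ (1 - 1 / (1 - θ)) - n₁ ^ (1 - 1 / (1 - θ))) -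
        j₂ ^ (1 / (1 - θ)) * (m₂ ^ (1 - 1 / (1 - θ)) - n₂ ^ (1 - 1 / (1 - θ)))| ≤ (N : ℝ) ^ ε) :
    |((1 / (1 - θ) - 1) / c' ^ (1 / (1 - θ)) * Real.exp q * (N : ℝ) ^ (1 - ε)) *
      ((1 / (1 - θ)) * Real.log j₁ +
          Real.log (m₁ ^ (1 - 1 / (1 - θ)) - n₁ ^ (1 - 1 / (1 - θ))) -
        ((1 / (1 - θ)) * Real.log j₂ +
          Real.log (m₂ ^ (1 - 1 / (1 - θ)) - n₂ ^ (1 - 1 / (1 - θ)))))| ≤ 1 := by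
  set Θ : ℝ := 1 / (1 - θ) with hΘdef
  have h1θ : 0 < 1 - θ := by linarith
  have hΘ1 : 1 < Θ := by rw [hΘdef, lt_div_iff₀ h1θ]; linarith
  set c₀ : ℝ := (Θ - 1) / c' ^ Θ with hc₀def
  have hc₀ : 0 < c₀ := div_pos (by linarith) (Real.rpow_pos_of_pos hc' _)
  have hN0 : (0:ℝ) < N := by positivity
  have hju₁ : 0 < j₁ := lt_of_lt_of_le (Real.exp_pos _) hj₁
  have hju₂ : 0 < j₂ := lt_of_lt_of_le (Real.exp_pos _) hj₂
  have hmn₁ : m₁ < n₁ := by nlinarith [Real.exp_pos q]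
  have hmn₂ : m₂ < n₂ := by nlinarith [Real.exp_pos q]
  have hx₁ : 0 < m₁ ^ (1 - Θ) - n₁ ^ (1 - Θ) :=
    sub_pos.mpr (Real.rpow_lt_rpow_of_neg hm₁ hmn₁ (by linarith))
  have hx₂ : 0 < m₂ ^ (1 - Θ) - n₂ ^ (1 - Θ) :=
    sub_pos.mpr (Real.rpow_lt_rpow_of_neg hm₂ hmn₂ (by linarith))
  set A₁ := j₁ ^ Θ * (m₁ ^ (1 - Θ) - n₁ ^ (1 - Θ)) with hA₁def
  set A₂ := j₂ ^ Θ * (m₂ ^ (1 - Θ) - n₂ ^ (1 - Θ)) with hA₂def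
  set L := c₀ * Real.exp q * N with hLdef
  have hL0 : 0 < L := by rw [hLdef]; positivity
  have hLA₁ : L ≤ A₁ := A_lower hθ0 hθ1 hc' hN u q hj₁ hm₁ hn₁ hq₁
  have hLA₂ : L ≤ A₂ := A_lower hθ0 hθ1 hc' hN u q hj₂ hm₂ hn₂ hq₂
  have hlog : |Real.log A₁ - Real.log A₂| ≤ (N : ℝ) ^ ε / L :=
    abs_log_sub_log_le hL0 hLA₁ hLA₂ hclose
  have ha₁ : Θ * Real.log j₁ + Real.log (m₁ ^ (1 - Θ) - n₁ ^ (1 - Θ)) = Real.log A₁ := by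
    rw [hA₁def, Real.log_mul (by positivity) hx₁.ne', Real.log_rpow hju₁]
  have ha₂ : Θ * Real.log j₂ + Real.log (m₂ ^ (1 - Θ) - n₂ ^ (1 - Θ)) = Real.log A₂ := by
    rw [hA₂def, Real.log_mul (by positivity) hx₂.ne', Real.log_rpow hju₂]
  rw [ha₁, ha₂, abs_mul]
  have hT0 : 0 < c₀ * Real.exp q * (N : ℝ) ^ (1 - ε) := by positivity
  rw [abs_of_pos hT0]
  have hkey : (c₀ * Real.exp q * (N : ℝ) ^ (1 - ε)) * ((N : ℝ) ^ ε / L) = 1 := by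
    rw [hLdef]
    have hNe : (N:ℝ) ^ (1 - ε) * (N:ℝ) ^ ε = N := by
      rw [← Real.rpow_add hN0, show (1 - ε) + ε = 1 by ring, Real.rpow_one]
    calc c₀ * Real.exp q * (N : ℝ) ^ (1 - ε) * ((N : ℝ) ^ ε / (c₀ * Real.exp q * N))
        = (c₀ * Real.exp q * ((N : ℝ) ^ (1 - ε) * (N : ℝ) ^ ε)) / (c₀ * Real.exp q * N) := by
          ring
      _ = (c₀ * Real.exp q * N) / (c₀ * Real.exp q * N) := by rw [hNe]
      _ = 1 := div_self (by positivity)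
  calc (c₀ * Real.exp q * (N : ℝ) ^ (1 - ε)) * |Real.log A₁ - Real.log A₂|
      ≤ (c₀ * Real.exp q * (N : ℝ) ^ (1 - ε)) * ((N : ℝ) ^ ε / L) :=
        mul_le_mul_of_nonneg_left hlog hT0.le
    _ = 1 := hkey

lemma integral_phase (Φ : ℝ → ℝ) {T : ℝ} (hT : 0 < T) (β : ℝ) :
    ∫ t : ℝ, e (t * β) * (Φ (t / T) : ℂ) = (T : ℂ) * fourierT Φ (-(T * β)) := by
  have hTne : T ≠ 0 := hT.ne'
  have h1 : (fun t : ℝ => e (t * β) * (Φ (t / T) : ℂ)) =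
      fun t : ℝ => (fun s : ℝ => (Φ s : ℂ) * e (-(-(T * β) * s))) (T⁻¹ * t) := by
    funext t
    simp only
    rw [mul_comm]
    congr 2
    · rw [div_eq_inv_mul]
    · field_simp
  rw [h1, MeasureTheory.Measure.integral_comp_mul_left
      (fun s : ℝ => (Φ s : ℂ) * e (-(-(T * β) * s))) T⁻¹, inv_inv, abs_of_pos hT]
  rw [fourierT]
  rw [Complex.real_smul]
theorem Duq_bounded_by_twisted_second_moment
    (θ : ℝ) (hθ0 : 0 < θ) (hθ1 : θ < 1)
    (c c' : ℝ) (hc : 0 < c) (hcc' : c < c') :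
    ∃ c₀ : ℝ, 0 < c₀ ∧
      ∀ Φ : ℝ → ℝ, ContDiff ℝ (⊤ : ℕ∞) Φ → Function.support Φ ⊆ Set.Icc (-1) 1 →
        (∀ t, 0 ≤ Φ t) →
        (∀ x : ℝ, (fourierT Φ x).im = 0 ∧ 0 ≤ (fourierT Φ x).re) →
        (∀ x : ℝ, |x| ≤ 1 → 1 ≤ (fourierT Φ x).re) →
      ∀ N : ℕ, 2 ≤ N → ∀ ε : ℝ, 0 < ε → ε < 1 → ∀ u q : ℕ,
        (N : ℝ) ^ (1 - ε) ≤ Real.exp u → Real.exp u ≤ (N : ℝ) ^ (1 + ε) →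
        (Duq θ c c' N ε u q : ℝ) ≤
          (1 / (c₀ * Real.exp q * (N : ℝ) ^ (1 - ε))) *
            ∫ t : ℝ, ‖Dpoly u ((1 / (1 - θ)) * t)‖ ^ 2 * ‖Ppoly θ c c' N u q t‖ ^ 2 *
              Φ (t / (c₀ * Real.exp q * (N : ℝ) ^ (1 - ε))) := by
  have h1θ : 0 < 1 - θ := by linarith
  have hc' : 0 < c' := hc.trans hcc'
  have hΘ1 : 1 < 1 / (1 - θ) := by rw [lt_div_iff₀ h1θ]; linarith
  refine ⟨(1 / (1 - θ) - 1) / c' ^ (1 / (1 - θ)),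
    div_pos (by linarith) (Real.rpow_pos_of_pos hc' _), ?_⟩
  intro Φ hΦsm hΦsupp hΦ0 hΦhat hΦhat1 N hN ε hε0 hε1 u q hu1 hu2
  set Θ : ℝ := 1 / (1 - θ) with hΘdef
  set c₀ : ℝ := (Θ - 1) / c' ^ Θ with hc₀def
  have hc₀ : 0 < c₀ := div_pos (by linarith) (Real.rpow_pos_of_pos hc' _)
  have hN0 : (0:ℝ) < N := by positivity
  set T : ℝ := c₀ * Real.exp q * (N:ℝ) ^ (1 - ε) with hTdef
  have hT0 : 0 < T := by rw [hTdef]; positivity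
  set J : Finset ℕ := Finset.Ico ⌈Real.exp u⌉₊ ⌈Real.exp ((u:ℝ) + 1)⌉₊ with hJdef
  set M : Finset (ℕ × ℕ) := (Finset.Icc ⌈c * Real.exp u / (N:ℝ) ^ (1 - θ)⌉₊
        ⌊c' * Real.exp u / (N:ℝ) ^ (1 - θ)⌋₊ ×ˢ
      Finset.Icc ⌈c * Real.exp u / (N:ℝ) ^ (1 - θ)⌉₊
        ⌊c' * Real.exp u / (N:ℝ) ^ (1 - θ)⌋₊).filter
      (fun p : ℕ × ℕ => Real.exp q ≤ (p.2 : ℝ) - (p.1 : ℝ) ∧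
        (p.2 : ℝ) - (p.1 : ℝ) < Real.exp ((q : ℝ) + 1)) with hMdef
  set X : Finset (ℕ × (ℕ × ℕ)) := J ×ˢ M with hXdef
  set a : ℕ × (ℕ × ℕ) → ℝ := fun z => Θ * Real.log z.1 +
      Real.log ((z.2.1 : ℝ) ^ (1 - Θ) - (z.2.2 : ℝ) ^ (1 - Θ)) with hadef
  have hJmem : ∀ j ∈ J, 0 < (j : ℝ) := by
    intro j hj
    rw [hJdef, Finset.mem_Ico] at hj
    have h1 : 1 ≤ j := le_trans (Nat.one_le_ceil_iff.mpr (Real.exp_pos _)) hj.1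
    exact_mod_cast h1
  have hMmem : ∀ p ∈ M, 0 < (p.1 : ℝ) ∧ (p.1 : ℝ) < (p.2 : ℝ) := by
    intro p hp
    rw [hMdef, Finset.mem_filter, Finset.mem_product, Finset.mem_Icc, Finset.mem_Icc] at hp
    have h1 : 1 ≤ p.1 := le_trans (Nat.one_le_ceil_iff.mpr (by positivity)) hp.1.1.1
    have h2 : (0:ℝ) < p.1 := by exact_mod_cast h1
    exact ⟨h2, by linarith [hp.2.1, Real.exp_pos (q:ℝ)]⟩
  have hxpos : ∀ p ∈ M, 0 < (p.1 : ℝ) ^ (1 - Θ) - (p.2 : ℝ) ^ (1 - Θ) := by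
    intro p hp
    obtain ⟨h1, h2⟩ := hMmem p hp
    exact sub_pos.mpr (Real.rpow_lt_rpow_of_neg h1 h2 (by linarith))
  -- rewriting the Dirichlet polynomials
  have hD : ∀ t : ℝ, Dpoly u (Θ * t) = ∑ j ∈ J, e (t * (Θ * Real.log j)) := by
    intro t
    rw [Dpoly, ← hJdef]
    apply Finset.sum_congr rfl
    intro j hj
    rw [show ((j:ℕ) : ℂ) = (((j : ℝ)) : ℂ) by norm_cast, cpow_e (hJmem j hj)]
    congr 1
    ring
  have hP : ∀ t : ℝ, Ppoly θ c c' N u q t =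
      ∑ p ∈ M, e (t * Real.log ((p.1 : ℝ) ^ (1 - Θ) - (p.2 : ℝ) ^ (1 - Θ))) := by
    intro t
    rw [Ppoly]
    rw [← hMdef, ← hΘdef]
    apply Finset.sum_congr rfl
    intro p hp
    rw [cpow_e (hxpos p hp)]
  have hpoint : ∀ t : ℝ, ‖Dpoly u (Θ * t)‖ ^ 2 * ‖Ppoly θ c c' N u q t‖ ^ 2
      = (∑ y ∈ X ×ˢ X, e (t * (a y.1 - a y.2))).re := by
    intro t
    have hDP : Dpoly u (Θ * t) * Ppoly θ c c' N u q t = ∑ z ∈ X, e (t * a z) := by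
      rw [hD t, hP t, Finset.sum_mul_sum, hXdef, Finset.sum_product]
      apply Finset.sum_congr rfl
      intro j _
      apply Finset.sum_congr rfl
      intro p _
      rw [← e_add]
      congr 1
      simp only [hadef]
      ring
    have hconj : (starRingEnd ℂ) (∑ z ∈ X, e (t * a z)) = ∑ z ∈ X, e (-(t * a z)) := by
      rw [map_sum]
      exact Finset.sum_congr rfl fun z _ => conj_e _
    have hprod : (∑ z ∈ X, e (t * a z)) * (∑ z ∈ X, e (-(t * a z)))
        = ∑ y ∈ X ×ˢ X, e (t * (a y.1 - a y.2)) := by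
      rw [Finset.sum_mul_sum]
      conv_rhs => rw [Finset.sum_product]
      apply Finset.sum_congr rfl
      intro z _
      apply Finset.sum_congr rfl
      intro w _
      rw [← e_add]
      congr 1
      show t * a z + -(t * a w) = t * (a z - a w)
      ring
    calc ‖Dpoly u (Θ * t)‖ ^ 2 * ‖Ppoly θ c c' N u q t‖ ^ 2
        = ‖Dpoly u (Θ * t) * Ppoly θ c c' N u q t‖ ^ 2 := by rw [norm_mul]; ring
      _ = ((Dpoly u (Θ * t) * Ppoly θ c c' N u q t) *
          (starRingEnd ℂ) (Dpoly u (Θ * t) * Ppoly θ c c' N u q t)).re := by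
          rw [Complex.mul_conj, Complex.ofReal_re, Complex.sq_norm]
      _ = _ := by rw [hDP, hconj, hprod]
  -- integrability
  have hΦc : Continuous Φ := hΦsm.continuous
  have hzero : ∀ t : ℝ, t ∉ Set.Icc (-T) T → Φ (t / T) = 0 := by
    intro t ht
    by_contra h
    have h2 : t / T ∈ Set.Icc (-1 : ℝ) 1 := hΦsupp (Function.mem_support.mpr h)
    rw [Set.mem_Icc] at h2
    apply ht
    rw [Set.mem_Icc]
    constructor
    · have := (le_div_iff₀ hT0).mp h2.1
      linarith
    · have := (div_le_iff₀ hT0).mp h2.2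
      linarith
  have hint : ∀ y : (ℕ × (ℕ × ℕ)) × (ℕ × (ℕ × ℕ)),
      Integrable (fun t : ℝ => e (t * (a y.1 - a y.2)) * (Φ (t / T) : ℂ)) := by
    intro y
    apply Continuous.integrable_of_hasCompactSupport
    · exact (continuous_e.comp (continuous_id.mul continuous_const)).mul
        (Complex.continuous_ofReal.comp (hΦc.comp (continuous_id.div_const T)))
    · apply HasCompactSupport.intro (isCompact_Icc (a := -T) (b := T))
      intro t ht
      simp [hzero t ht]
  -- computing the integral
  have hIeq : (∫ t : ℝ, ‖Dpoly u (Θ * t)‖ ^ 2 * ‖Ppoly θ c c' N u q t‖ ^ 2 * Φ (t / T))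
      = ∑ y ∈ X ×ˢ X, T * (fourierT Φ (-(T * (a y.1 - a y.2)))).re := by
    have step1 : ∀ t : ℝ, ‖Dpoly u (Θ * t)‖ ^ 2 * ‖Ppoly θ c c' N u q t‖ ^ 2 * Φ (t / T)
        = ∑ y ∈ X ×ˢ X, (e (t * (a y.1 - a y.2)) * (Φ (t / T) : ℂ)).re := by
      intro t
      rw [hpoint t, Complex.re_sum, Finset.sum_mul]
      apply Finset.sum_congr rfl
      intro y _
      simp [Complex.mul_re]
    simp_rw [step1]
    have hintre : ∀ y : (ℕ × (ℕ × ℕ)) × (ℕ × (ℕ × ℕ)),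
        Integrable (fun t : ℝ => (e (t * (a y.1 - a y.2)) * (Φ (t / T) : ℂ)).re) :=
      fun y => (hint y).re
    rw [MeasureTheory.integral_finset_sum _ (fun y _ => hintre y)]
    apply Finset.sum_congr rfl
    intro y _
    have h3 : (∫ t : ℝ, (e (t * (a y.1 - a y.2)) * (Φ (t / T) : ℂ)).re)
        = (∫ t : ℝ, e (t * (a y.1 - a y.2)) * (Φ (t / T) : ℂ)).re :=
      integral_re (hint y)
    rw [h3, integral_phase Φ hT0 (a y.1 - a y.2), Complex.re_ofReal_mul]
  set G : Finset ((ℕ × (ℕ × ℕ)) × (ℕ × (ℕ × ℕ))) :=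
    (X ×ˢ X).filter (fun y => |T * (a y.1 - a y.2)| ≤ 1) with hGdef
  have hsumlb : (G.card : ℝ) * T ≤
      ∑ y ∈ X ×ˢ X, T * (fourierT Φ (-(T * (a y.1 - a y.2)))).re := by
    calc (G.card : ℝ) * T = ∑ _y ∈ G, T := by rw [Finset.sum_const, nsmul_eq_mul]
      _ ≤ ∑ y ∈ G, T * (fourierT Φ (-(T * (a y.1 - a y.2)))).re := by
          apply Finset.sum_le_sum
          intro y hy
          rw [hGdef, Finset.mem_filter] at hy
          have h1 : |(-(T * (a y.1 - a y.2)))| ≤ 1 := by rw [abs_neg]; exact hy.2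
          have h2 := hΦhat1 _ h1
          nlinarith
      _ ≤ ∑ y ∈ X ×ˢ X, T * (fourierT Φ (-(T * (a y.1 - a y.2)))).re := by
          apply Finset.sum_le_sum_of_subset_of_nonneg (Finset.filter_subset _ _)
          intro y _ _
          exact mul_nonneg hT0.le (hΦhat (-(T * (a y.1 - a y.2)))).2
  -- counting
  have hcount : (Duq θ c c' N ε u q : ℝ) ≤ (G.card : ℝ) := by
    set ψ : ℕ × ℕ × ℕ × ℕ × ℕ × ℕ → (ℕ × (ℕ × ℕ)) × (ℕ × (ℕ × ℕ)) :=
      fun z => ((z.1, z.2.2.1, z.2.2.2.1), (z.2.1, z.2.2.2.2.1, z.2.2.2.2.2)) with hψdef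
    have hinj : Function.Injective ψ := by
      intro x y h
      simp only [hψdef, Prod.mk.injEq] at h
      obtain ⟨⟨h1, h2, h3⟩, h4, h5, h6⟩ := h
      exact Prod.ext h1 (Prod.ext h4 (Prod.ext h2 (Prod.ext h3 (Prod.ext h5 h6))))
    set S : Set (ℕ × ℕ × ℕ × ℕ × ℕ × ℕ) := {t : ℕ × ℕ × ℕ × ℕ × ℕ × ℕ |
      DuqCond θ c c' N ε u q t.1 t.2.1 t.2.2.1 t.2.2.2.1 t.2.2.2.2.1 t.2.2.2.2.2} with hSdef
    have hsub : S ⊆ ψ ⁻¹' ↑G := by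
      rintro ⟨j₁, j₂, m₁, n₁, m₂, n₂⟩ h
      simp only [hSdef, Set.mem_setOf_eq, DuqCond] at h
      obtain ⟨hj₁0, hj₂0, hm₁0, hn₁0, hm₂0, hn₂0, hj₁l, hj₁u, hj₂l, hj₂u,
        hm₁l, hm₁u, hn₁l, hn₁u, hm₂l, hm₂u, hn₂l, hn₂u, hq₁l, hq₁u, hq₂l, hq₂u, hclose⟩ := h
      rw [Set.mem_preimage, Finset.mem_coe, hGdef, Finset.mem_filter]
      have hm₁0' : (0:ℝ) < m₁ := by exact_mod_cast hm₁0
      have hm₂0' : (0:ℝ) < m₂ := by exact_mod_cast hm₂0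
      constructor
      · rw [Finset.mem_product]
        constructor <;> (rw [hXdef, Finset.mem_product]; constructor)
        · rw [hJdef, Finset.mem_Ico]
          exact ⟨Nat.ceil_le.mpr hj₁l, Nat.lt_ceil.mpr hj₁u⟩
        · rw [hMdef, Finset.mem_filter, Finset.mem_product, Finset.mem_Icc, Finset.mem_Icc]
          exact ⟨⟨⟨Nat.ceil_le.mpr hm₁l, Nat.le_floor hm₁u⟩,
            Nat.ceil_le.mpr hn₁l, Nat.le_floor hn₁u⟩, hq₁l, hq₁u⟩
        · rw [hJdef, Finset.mem_Ico]
          exact ⟨Nat.ceil_le.mpr hj₂l, Nat.lt_ceil.mpr hj₂u⟩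
        · rw [hMdef, Finset.mem_filter, Finset.mem_product, Finset.mem_Icc, Finset.mem_Icc]
          exact ⟨⟨⟨Nat.ceil_le.mpr hm₂l, Nat.le_floor hm₂u⟩,
            Nat.ceil_le.mpr hn₂l, Nat.le_floor hn₂u⟩, hq₂l, hq₂u⟩
      · have hkb := key_bound hθ0 hθ1 hc' hN u q hj₁l hj₂l hm₁0' hm₂0'
          hn₁u hn₂u hq₁l hq₂l hclose
        exact hkb
    have h1 : Set.ncard S ≤ G.card := by
      have h2 : ψ '' S ⊆ ↑G := by
        rintro _ ⟨x, hx, rfl⟩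
        exact hsub hx
      calc S.ncard = (ψ '' S).ncard := (Set.ncard_image_of_injective S hinj).symm
        _ ≤ (↑G : Set ((ℕ × (ℕ × ℕ)) × (ℕ × (ℕ × ℕ)))).ncard :=
            Set.ncard_le_ncard h2 G.finite_toSet
        _ = G.card := Set.ncard_coe_finset G
    have h3 : Duq θ c c' N ε u q = Set.ncard S := by rw [Duq, hSdef]
    rw [h3]
    exact_mod_cast h1
  calc (Duq θ c c' N ε u q : ℝ) ≤ (G.card : ℝ) := hcount
    _ = (1 / T) * ((G.card : ℝ) * T) := by field_simp
    _ ≤ (1 / T) * ∫ t : ℝ, ‖Dpoly u (Θ * t)‖ ^ 2 * ‖Ppoly θ c c' N u q t‖ ^ 2 * Φ (t / T) := by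
        apply mul_le_mul_of_nonneg_left _ (by positivity)
        rw [hIeq]
        exact hsumlb
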